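/- arXiv:1801.03959 — 4 statements merged into one kernel-verified Lean document; each statement's English description precedes it below -/
import Mathlib

section
/- Let Z_S ⊆ ⊕_{x∈V} S be the structure algebra: tuples (z_x) with z_x ≡ z_{s_α x} mod α^∨ for all x ∈ V and α ∈ R⁺, where V is a principal homogeneous W-set. For a subset L = {x, s_α x} of V with s_α x ≠ x, the image of the projection Z_S → S ⊕ S onto the coordinates x and s_α x equals {(z, z') ∈ S ⊕ S | z ≡ z' mod α^∨}, provided char k ≠ 2 and the GKM condition holds. -/
/-- Let `Z_S ⊆ ⊕_{x ∈ V} S` be the structure algebra, consisting of tuples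
`(z_x)` with `z_x ≡ z_{s_α x} (mod α^∨)` for all `x ∈ V` and positive roots `α`, where
`V` is a principal homogeneous `W`-set and `S` is (the symmetric algebra of) the reflection
representation over `k` (encoded by a linear map `ι : X^∨ ⊗ k → S` and a `W`-action `ρ`
with `s_β(h) = h − ⟨β,h⟩β^∨`).  If `char k ≠ 2` and the GKM condition holds, then for
`L = {x, s_α x}` with `s_α x ≠ x` the image of the coordinate projection
`Z_S → S ⊕ S` equals `{(z, z') | z ≡ z' mod α^∨}`. -/
theorem structureAlgebra_subgeneric_image
    {k : Type*} [Field k] (h2 : (2 : k) ≠ 0)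
    {Xv : Type*} [AddCommGroup Xv] [Module k Xv]
    {S : Type*} [CommRing S] [Algebra k S]
    (ι : Xv →ₗ[k] S) (hι : Function.Injective ι)
    {W : Type*} [Group W] {V : Type*} [MulAction W V]
    (hfree : ∀ (w : W) (x : V), w • x = x → w = 1)
    (htrans : ∀ x y : V, ∃ w : W, w • x = y)
    {P : Type*} [Fintype P]  -- indexing the positive roots
    (cor : P → Xv)  -- the coroots α^∨
    (pairing : P → (Xv →ₗ[k] k))  -- the pairings ⟨α, ·⟩
    (sw : P → W)  -- the reflections s_α ∈ W
    (hsw : ∀ a : P, sw a * sw a = 1)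
    (ρ : W →* (Xv →ₗ[k] Xv))  -- the W-action on X^∨ ⊗ k
    (hρs : ∀ (a : P) (h : Xv), ρ (sw a) h = h - pairing a h • cor a)
    (hpair2 : ∀ a : P, pairing a (cor a) = 2)
    (hGKM : ∀ a b : P, a ≠ b → ∀ t : k, cor a ≠ t • cor b)
    (a : P) (x : V) (hax : sw a • x ≠ x) :
    {pq : S × S | ∃ z : V → S,
        (∀ (b : P) (y : V), ι (cor b) ∣ z y - z (sw b • y)) ∧
        pq = (z x, z (sw a • x))}
      = {pq : S × S | ι (cor a) ∣ pq.1 - pq.2} := by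
  ext pq
  constructor
  · rintro ⟨z, hz, rfl⟩
    exact hz a x
  · rintro ⟨s, hs⟩
    -- choose a trivialization V ≅ W based at x
    choose w hw using fun y => htrans x y
    have hwx : w x = 1 := hfree (w x) x (hw x)
    have hws : ∀ (b : P) (y : V), w (sw b • y) = sw b * w y := by
      intro b y
      have h1 : ((w (sw b • y))⁻¹ * (sw b * w y)) • x = x := by
        rw [mul_smul, mul_smul, hw y, inv_smul_eq_iff, hw]
      have := hfree _ _ h1
      rw [inv_mul_eq_one] at this
      exact this
    set c : V → S := fun y => ι (ρ (w y) (cor a)) with hc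
    have hkey : ∀ (b : P) (y : V),
        c y - c (sw b • y) = algebraMap k S (pairing b (ρ (w y) (cor a))) * ι (cor b) := by
      intro b y
      simp only [hc, hws b y, map_mul, Module.End.mul_apply, hρs, map_sub, map_smul,
        Algebra.smul_def]
      ring
    refine ⟨fun y => pq.1 + algebraMap k S 2⁻¹ * s * (c y - c x), ?_, ?_⟩
    · intro b y
      have : (pq.1 + algebraMap k S 2⁻¹ * s * (c y - c x))
          - (pq.1 + algebraMap k S 2⁻¹ * s * (c (sw b • y) - c x))
          = ι (cor b) * (algebraMap k S 2⁻¹ * s * algebraMap k S (pairing b (ρ (w y) (cor a)))) := by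
        linear_combination (algebraMap k S 2⁻¹ * s) * hkey b y
      exact Dvd.intro _ this.symm
    · have hcx : c (sw a • x) - c x = - (algebraMap k S 2 * ι (cor a)) := by
        have := hkey a x
        rw [hwx, map_one] at this
        simp only [Module.End.one_apply, hpair2] at this
        linear_combination -this
      have h2S : algebraMap k S 2⁻¹ * algebraMap k S 2 = 1 := by
        rw [← map_mul, inv_mul_cancel₀ h2, map_one]
      have hzx : pq.1 + algebraMap k S 2⁻¹ * s * (c x - c x) = pq.1 := by ring
      have hzsx : pq.1 + algebraMap k S 2⁻¹ * s * (c (sw a • x) - c x) = pq.2 := by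
        rw [hcx]
        linear_combination hs - (s * ι (cor a)) * h2S
      rw [show pq = (pq.1, pq.2) from rfl]
      exact Prod.ext hzx.symm hzsx.symm
end

section
/- Let Z be the structure algebra over a flat S-algebra T, and let M be a root torsion free Z-module (multiplication by α^∨ is injective on M for all α ∈ R⁺). If {L_i}_{i∈I} is a finite family of subsets of V with V = ⋃_i L_i, then the direct sum of the canonical quotient maps p^{L_i}: M → M^{L_i} = Z^{L_i} ⊗_Z M is injective. -/
/-!
Let `C = ∏ α^∨` and let `e_L ∈ Z` be `C` on `L` and `0` off `L`. Then `e_L` kills the kernel of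
`Z → Z^L`, hence kills every `m` whose image in `M^L` vanishes, so `C - e_L` acts on such `m`
as `C`. If the image of `m` vanishes in all `M^{L_k}`, then `∏ₖ (C - e_{L_k})` acts on `m` as
`C ^ n`; but since the `L_k` cover `V` this product is `0` in `Z`. So `C ^ n • m = 0`, and
`m = 0` by root torsion freeness.
-/

noncomputable section

variable {T : Type*} [CommRing T] {V : Type*} {I : Type*} [Fintype I]

/-- The structure algebra `Z` over the base ring `T`: tuples `z : V → T` with
`z_x ≡ z_{s_α x} (mod α^∨)` for all `x ∈ V` and positive roots `α` (indexed by `I`,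
with reflection action `s : I → V → V` and coroots `c : I → T`). -/
def StructAlg (s : I → V → V) (c : I → T) : Subalgebra T (V → T) where
  carrier := {z | ∀ (i : I) (x : V), c i ∣ z x - z (s i x)}
  mul_mem' := by
    intro a b ha hb i x
    have h : (a * b) x - (a * b) (s i x)
        = a x * (b x - b (s i x)) + (a x - a (s i x)) * b (s i x) := by
      simp only [Pi.mul_apply]; ring
    rw [h]
    exact dvd_add ((hb i x).mul_left _) ((ha i x).mul_right _)
  one_mem' := by intro i x; simp
  add_mem' := by
    intro a b ha hb i x
    have h : (a + b) x - (a + b) (s i x)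
        = (a x - a (s i x)) + (b x - b (s i x)) := by
      simp only [Pi.add_apply]; ring
    rw [h]
    exact dvd_add (ha i x) (hb i x)
  zero_mem' := by intro i x; simp
  algebraMap_mem' := by intro t i x; simp

/-- The coroot `α^∨`, viewed as the constant tuple in the structure algebra. -/
def corootConst (s : I → V → V) (c : I → T) (i : I) : StructAlg s c :=
  ⟨fun _ => c i, by intro j x; simp⟩

/-- The coordinate restriction homomorphism `(V → T) → (L → T)`. -/
def restrictHom (L : Set V) : (V → T) →+* (L → T) :=
  Pi.ringHom fun x : L => Pi.evalRingHom (fun _ : V => T) (x : V)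

/-- The kernel of `Z → Z^L`, the projection of the structure algebra to the coordinates
in `L`; so `M^L = Z^L ⊗_Z M` identifies with `M / (suppIdeal L) M`. -/
def suppIdeal (s : I → V → V) (c : I → T) (L : Set V) : Ideal (StructAlg s c) :=
  RingHom.ker ((restrictHom L).comp (StructAlg s c).val.toRingHom)

theorem Ideal.pow_card_mem_of_prod_sub_mem {R ι : Type*} [CommRing R] {J : Ideal R}
    (s : Finset ι) {C : R} {e : ι → R} (he : ∀ k ∈ s, e k ∈ J)
    (h : ∏ k ∈ s, (C - e k) ∈ J) : C ^ s.card ∈ J := by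
  rw [← Ideal.Quotient.eq_zero_iff_mem] at h ⊢
  rw [map_prod, Finset.prod_congr rfl fun k hk => by
    rw [map_sub, Ideal.Quotient.eq_zero_iff_mem.2 (he k hk), sub_zero]] at h
  rwa [Finset.prod_const, ← map_pow] at h

theorem smul_eq_zero_of_mem_ideal_smul_top {R M : Type*} [Semiring R] [AddCommMonoid M]
    [Module R M] {J : Ideal R} {a : R} (ha : ∀ r ∈ J, a * r = 0) {m : M}
    (hm : m ∈ J • (⊤ : Submodule R M)) : a • m = 0 := by
  refine Submodule.smul_induction_on hm (fun r hr n _ => ?_) fun x y hx hy => ?_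
  · rw [smul_smul, ha r hr, zero_smul]
  · rw [smul_add, hx, hy, add_zero]

omit [Fintype I] in
theorem mem_suppIdeal_iff (s : I → V → V) (c : I → T) (L : Set V) (z : StructAlg s c) :
    z ∈ suppIdeal s c L ↔ ∀ x ∈ L, (z : V → T) x = 0 := by
  simp only [suppIdeal, RingHom.mem_ker, funext_iff, Subtype.forall]
  rfl

/-- The factor `∏ α^∨` is what makes this indicator satisfy every congruence
`z_x ≡ z_{s_α x} (mod α^∨)`. -/
def StructAlg.cutoff (s : I → V → V) (c : I → T) (L : Set V) : StructAlg s c :=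
  ⟨L.indicator fun _ => ∏ i, c i, by
    intro i x
    have hdvd : ∀ y, c i ∣ L.indicator (fun _ => ∏ j, c j) y := fun y => by
      by_cases hy : y ∈ L
      · simpa [hy] using Finset.dvd_prod_of_mem c (Finset.mem_univ i)
      · simp [hy]
    exact dvd_sub (hdvd x) (hdvd (s i x))⟩

theorem StructAlg.cutoff_mul_eq_zero (s : I → V → V) (c : I → T) (L : Set V)
    {z : StructAlg s c} (hz : z ∈ suppIdeal s c L) : cutoff s c L * z = 0 := by
  rw [mem_suppIdeal_iff] at hz
  ext x
  by_cases hx : x ∈ L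
  · simp [cutoff, hz x hx]
  · simp [cutoff, hx]

theorem StructAlg.prod_sub_cutoff_eq_zero (s : I → V → V) (c : I → T) {κ : Type*}
    [Fintype κ] (L : κ → Set V) (hL : (⋃ k, L k) = Set.univ) :
    ∏ k, (∏ i, corootConst s c i - cutoff s c (L k)) = 0 := by
  ext x
  obtain ⟨k, hk⟩ := Set.mem_iUnion.1 (hL ▸ Set.mem_univ x)
  rw [← Subalgebra.val_apply, map_prod, Finset.prod_apply]
  refine Finset.prod_eq_zero (Finset.mem_univ k) ?_
  simp [corootConst, cutoff, hk]

/-- Let `M` be a root torsion free module over the structure algebra `Z`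
(multiplication by each coroot `α^∨` is injective on `M`).  If `{L_i}` is a finite family
of subsets of `V` covering `V`, then the direct sum of the canonical quotient maps
`p^{L_i} : M → M^{L_i} = Z^{L_i} ⊗_Z M = M/(ker p^{L_i})M` is injective. -/
theorem rtf_module_embeds (s : I → V → V) (c : I → T)
    (M : Type*) [AddCommGroup M] [Module (StructAlg s c) M]
    (hM : ∀ i : I, Function.Injective fun m : M => corootConst s c i • m)
    {κ : Type*} [Finite κ] (L : κ → Set V) (hL : (⋃ k, L k) = Set.univ) :
    Function.Injective (fun m : M => fun k : κ =>
      (Submodule.Quotient.mk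
        (p := suppIdeal s c (L k) • (⊤ : Submodule (StructAlg s c) M)) m)) := by
  cases nonempty_fintype κ
  set C := ∏ i, corootConst s c i
  have hC : IsSMulRegular M (C ^ Fintype.card κ) :=
    (Finset.prod_induction (fun i => corootConst s c i) (IsSMulRegular M)
      (fun _ _ => IsSMulRegular.mul) (IsSMulRegular.one M) fun i _ => hM i).pow _
  intro m₁ m₂ h
  have hmem : ∀ k, m₁ - m₂ ∈ suppIdeal s c (L k) • (⊤ : Submodule (StructAlg s c) M) :=
    fun k => (Submodule.Quotient.eq _).1 (congrFun h k)
  have hkill : C ^ Fintype.card κ ∈ Ideal.torsionOf (StructAlg s c) M (m₁ - m₂) := by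
    refine Ideal.pow_card_mem_of_prod_sub_mem Finset.univ
      (e := fun k => StructAlg.cutoff s c (L k)) (fun k _ => ?_) ?_
    · exact (Ideal.mem_torsionOf_iff _ _).2 <| smul_eq_zero_of_mem_ideal_smul_top
        (fun _ => StructAlg.cutoff_mul_eq_zero s c (L k)) (hmem k)
    · rw [StructAlg.prod_sub_cutoff_eq_zero s c L hL]
      exact zero_mem _
  exact sub_eq_zero.1 (hC.right_eq_zero_of_smul ((Ideal.mem_torsionOf_iff _ _).1 hkill))
end
end

section
/- Let Z^L = {(z_x, z_{xs}) ∈ T ⊕ T | z_x ≡ z_{xs} mod α^∨} for L = {x, xs} with xs = s_α x, and let Z^{L,s} be the subalgebra of η_s-invariants, where η_s swaps the two coordinates. If char k ≠ 2 and T is a flat S-algebra (so that 2 and α^∨ are not zero-divisors), then Z^{L,s} = T·(1,1), and Z^L is a free Z^{L,s}-module with basis (1,1) and (0,α^∨); in particular Z^L ≅ Z^{L,s} ⊕ Z^{L,s}·(0,α^∨). -/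
/-- Let `Z^L = {(z_x, z_{xs}) ∈ T ⊕ T | z_x ≡ z_{xs} mod α^∨}` and let
`η_s` swap the two coordinates.  If `char k ≠ 2`, `T` is a `k`-algebra and `α^∨` is a
non-zero-divisor, then the `η_s`-invariants `Z^{L,s}` are exactly `T·(1,1)`, and `Z^L` is
a free `Z^{L,s}`-module with basis `(1,1)` and `(0,α^∨)`: every element of `Z^L` is a
unique `T`-linear combination `c₁·(1,1) + c₂·(0,α^∨)`. -/
theorem ZL_free_over_invariants
    {k : Type*} [Field k] (h2 : (2 : k) ≠ 0)
    {T : Type*} [CommRing T] [Algebra k T]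
    (av : T) (hav : ∀ t : T, av * t = 0 → t = 0) :
    ({z : T × T | (av ∣ z.1 - z.2) ∧ (z.2, z.1) = z} = {z : T × T | ∃ t : T, z = (t, t)}) ∧
    (∀ z : T × T, av ∣ z.1 - z.2 →
      ∃! c : T × T, z = (c.1, c.1) + c.2 • ((0 : T), av)) := by
  constructor
  · ext z
    simp only [Set.mem_setOf_eq, Prod.ext_iff]
    constructor
    · rintro ⟨-, h1, h2⟩
      exact ⟨z.1, rfl, h1⟩
    · rintro ⟨t, h1, h2⟩
      refine ⟨⟨0, by rw [h1, h2]; ring⟩, ?_, ?_⟩ <;> rw [h1, h2]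
  · rintro z ⟨t, ht⟩
    refine ⟨(z.1, -t), ?_, ?_⟩
    · have : z.2 = z.1 + (-t) * av := by rw [mul_comm]; linear_combination -ht
      ext <;> simp [this]
    · rintro ⟨c1, c2⟩ hc
      simp only [Prod.ext_iff, Prod.smul_fst, Prod.smul_snd, smul_eq_mul, Prod.fst_add,
        Prod.snd_add, mul_zero, add_zero] at hc
      obtain ⟨h1, hh2⟩ := hc
      have : av * (c2 + t) = 0 := by
        rw [mul_add]; linear_combination h1 - hh2 - ht
      have := hav _ this
      ext
      · exact h1.symm
      · simpa [eq_neg_iff_add_eq_zero] using this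
end

section
/- Let M be a root torsion free Z-module that is Z-supported on L = {x, xs}, where xs = s_α x ≠ x. Then for each element m ∈ Z ⊗_{Z^s} M there is a unique s-invariant element m′ ∈ Z ⊗_{Z^s} M (i.e., fixed by η_s ⊗ id) whose x-stalk agrees with that of m: m_x = m′_x. -/
open TensorProduct

noncomputable section

variable {T : Type*} [CommRing T]

/-- `Z^L = {(z_x, z_{xs}) | z_x ≡ z_{xs} mod α^∨} ⊆ T ⊕ T`, as a `T`-module
(`T = Z^{L,s}` is the diagonal, via `t ↦ (t,t)`). -/
def ZL (av : T) : Submodule T (T × T) where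
  carrier := {z | av ∣ z.1 - z.2}
  add_mem' := by
    intro a b ha hb
    have h : (a + b).1 - (a + b).2 = (a.1 - a.2) + (b.1 - b.2) := by
      simp only [Prod.fst_add, Prod.snd_add]; ring
    rw [Set.mem_setOf_eq, h]
    exact dvd_add ha hb
  zero_mem' := by simp
  smul_mem' := by
    intro t a ha
    have h : (t • a).1 - (t • a).2 = t * (a.1 - a.2) := by
      simp only [Prod.smul_fst, Prod.smul_snd, smul_eq_mul]; ring
    rw [Set.mem_setOf_eq, h]
    exact ha.mul_left t

/-- The coordinate swap `η_s` on `Z^L` (it is `T = Z^{L,s}`-linear). -/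
def etaL (av : T) : ZL av →ₗ[T] ZL av where
  toFun z := ⟨(z.1.2, z.1.1), by
    obtain ⟨z, hz⟩ := z
    exact dvd_sub_comm.mp hz⟩
  map_add' := by intro a b; rfl
  map_smul' := by intro t a; rfl

/-- The `x`-stalk map on `Z ⊗_{Z^s} M = Z^L ⊗_{Z^{L,s}} M`: evaluation of the first
(`x`-)coordinate, `(p, q) ⊗ m ↦ p • m`. -/
def stalkX (av : T) (M : Type*) [AddCommGroup M] [Module T M] :
    (ZL av) ⊗[T] M →ₗ[T] M :=
  TensorProduct.lift ((LinearMap.lsmul T M).comp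
    ((LinearMap.fst T T T).comp (ZL av).subtype))

namespace S18

variable (av : T)

/-- The basis element `(1,1)` of `Z^L`. -/
def e1 : ZL av := ⟨(1, 1), by simp [ZL]⟩

/-- The basis element `(α^∨, 0)` of `Z^L`. -/
def e2 : ZL av := ⟨(av, 0), by simp [ZL]⟩

variable (M : Type*) [AddCommGroup M] [Module T M]

/-- `(u, v) ↦ e1 ⊗ u + e2 ⊗ v`. -/
def F : M × M →ₗ[T] (ZL av) ⊗[T] M :=
  (TensorProduct.mk T (ZL av) M (e1 av)).comp (LinearMap.fst T M M) +
    (TensorProduct.mk T (ZL av) M (e2 av)).comp (LinearMap.snd T M M)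

lemma F_apply (u v : M) : F av M (u, v) = e1 av ⊗ₜ u + e2 av ⊗ₜ v := rfl

/-- The `xs`-stalk: `(p, q) ⊗ m ↦ q • m`. -/
def stalkXS : (ZL av) ⊗[T] M →ₗ[T] M :=
  TensorProduct.lift ((LinearMap.lsmul T M).comp
    ((LinearMap.snd T T T).comp (ZL av).subtype))

lemma stalkX_tmul (z : ZL av) (n : M) : stalkX av M (z ⊗ₜ n) = z.1.1 • n := rfl

lemma stalkXS_tmul (z : ZL av) (n : M) : stalkXS av M (z ⊗ₜ n) = z.1.2 • n := rfl

lemma stalkX_F (u v : M) : stalkX av M (F av M (u, v)) = u + av • v := by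
  simp [F_apply, stalkX_tmul, e1, e2]

lemma stalkXS_F (u v : M) : stalkXS av M (F av M (u, v)) = u := by
  simp [F_apply, stalkXS_tmul, e1, e2]

lemma F_surjective : Function.Surjective (F av M) := by
  intro m
  induction m using TensorProduct.induction_on with
  | zero => exact ⟨0, map_zero _⟩
  | tmul z n =>
    obtain ⟨⟨p, q⟩, hz⟩ := z
    obtain ⟨c, hc⟩ := hz
    refine ⟨(q • n, c • n), ?_⟩
    rw [F_apply, ← TensorProduct.smul_tmul, ← TensorProduct.smul_tmul,
      ← TensorProduct.add_tmul]
    congr 1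
    apply Subtype.ext
    have hc' : p - q = av * c := hc
    have : q • (e1 av : T × T) + c • (e2 av : T × T) = (p, q) := by
      simp only [e1, e2, Prod.smul_mk, smul_eq_mul, Prod.mk_add_mk, Prod.mk.injEq]
      constructor
      · linear_combination -hc'
      · ring
    exact this
  | add a b ha hb =>
    obtain ⟨pa, hpa⟩ := ha
    obtain ⟨pb, hpb⟩ := hb
    exact ⟨pa + pb, by rw [map_add, hpa, hpb]⟩

lemma etaL_e1 : etaL av (e1 av) = e1 av := rfl

lemma etaL_e2 : etaL av (e2 av) = av • e1 av - e2 av := by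
  apply Subtype.ext
  simp [etaL, e1, e2, Prod.ext_iff]

lemma eta_F (u v : M) :
    LinearMap.rTensor M (etaL av) (F av M (u, v)) = F av M (u + av • v, -v) := by
  rw [F_apply, F_apply, map_add, LinearMap.rTensor_tmul, LinearMap.rTensor_tmul,
    etaL_e1, etaL_e2, TensorProduct.sub_tmul, TensorProduct.smul_tmul,
    TensorProduct.tmul_add, TensorProduct.tmul_neg]
  abel

end S18

open S18 in
/-- Let `M` be a root torsion free module supported on `L = {x, xs}`,
`xs = s_α x ≠ x`, so that `Z ⊗_{Z^s} M = Z^L ⊗_{Z^{L,s}} M`.  Then for every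
`m ∈ Z ⊗_{Z^s} M` there is a unique `s`-invariant element `m'` (fixed by `η_s ⊗ id`)
with the same `x`-stalk: `m_x = m'_x`. -/
theorem unique_s_invariant_with_same_stalk
    (av : T) (hav : ∀ t : T, av * t = 0 → t = 0) [Invertible (2 : T)]
    (M : Type*) [AddCommGroup M] [Module T M]
    (havM : Function.Injective fun m : M => av • m)
    (m : (ZL av) ⊗[T] M) :
    ∃! m' : (ZL av) ⊗[T] M,
      LinearMap.rTensor M (etaL av) m' = m' ∧ stalkX av M m' = stalkX av M m := by
  -- injectivity of `F` on the relevant components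
  have Finj : ∀ u v u' v' : M, F av M (u, v) = F av M (u', v') → u = u' ∧ v = v' := by
    intro u v u' v' h
    have h1 : u = u' := by
      have := congrArg (stalkXS av M) h
      rwa [stalkXS_F, stalkXS_F] at this
    have h2 : v = v' := by
      have := congrArg (stalkX av M) h
      rw [stalkX_F, stalkX_F, h1] at this
      exact havM (add_left_cancel this)
    exact ⟨h1, h2⟩
  -- a fixed element has vanishing `e2`-component
  have fix_v : ∀ u v : M,
      LinearMap.rTensor M (etaL av) (F av M (u, v)) = F av M (u, v) → v = 0 := by
    intro u v h
    rw [eta_F] at h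
    obtain ⟨h1, -⟩ := Finj _ _ _ _ h
    have hv : av • v = 0 := add_eq_left.mp h1
    exact havM (show av • v = av • (0 : M) by simpa using hv)
  obtain ⟨⟨u, v⟩, rfl⟩ := F_surjective av M m
  refine ⟨F av M (u + av • v, 0), ⟨?_, ?_⟩, ?_⟩
  · rw [eta_F]; simp
  · rw [stalkX_F, stalkX_F]; simp
  · rintro m'' ⟨hfix, hstalk⟩
    obtain ⟨⟨u'', v''⟩, rfl⟩ := F_surjective av M m''
    have hv : v'' = 0 := fix_v _ _ hfix
    subst hv
    rw [stalkX_F, stalkX_F] at hstalk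
    simp only [smul_zero, add_zero] at hstalk
    rw [hstalk]
end
end
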